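/- arXiv:1602.00413 — 2 statements merged into one kernel-verified Lean document; each statement's English description precedes it below -/
import Mathlib

section
/- Let V ⊆ (ℤ/2)^{2n} be a subgroup with a generating set consisting of c symplectic pairs g₁,h₁,…,g_c,h_c and r isotropic generators g_{c+1},…,g_{c+r} satisfying the standard commutation relations. Then V admits a new generating set of one of three types: (I) all generators of even weight; (II) exactly one isotropic generator of odd weight and all other generators of even weight; (III) one symplectic pair with both members of odd weight and all other generators of even weight; in each case the new generators still satisfy the commutation relations. -/
open Finset

/-- An `n`-qubit Pauli operator modulo phase, identified with `(u, v) ∈ (ℤ/2)ⁿ × (ℤ/2)ⁿ`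
(corresponding to `Z^u X^v`). -/
abbrev Pauli (n : ℕ) := (Fin n → ZMod 2) × (Fin n → ZMod 2)

/-- The weight of a Pauli operator: the number of qubits on which it acts nontrivially. -/
def wtP {n : ℕ} (g : Pauli n) : ℕ :=
  (Finset.univ.filter fun i => g.1 i ≠ 0 ∨ g.2 i ≠ 0).card

/-- The symplectic inner product of two Pauli operators. -/
def sip {n : ℕ} (g h : Pauli n) : ZMod 2 :=
  ∑ i, (g.1 i * h.2 i + g.2 i * h.1 i)

/-!
Reduced mod 2, the weight is a quadratic form on `(ℤ/2)^{2n}` whose polar form is the symplectic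
product, so the statement is one about an arbitrary quadratic form over `𝔽₂`. Adding one generator
to another does not change the generated subgroup, and the following such moves preserve the
commutation relations while strictly decreasing the number of odd generators: inside a pair of
different parities, add the even member to the odd one; add an odd isotropic generator to another
odd `g`; for two odd pairs, replace `(gᵢ, hⱼ)` by `(gᵢ + gⱼ, hⱼ + hᵢ)`. A family to which none of
them applies is of type I, II or III.
-/

open Function QuadraticMap

theorem zmod_two_eq_zero_or_eq_one (x : ZMod 2) : x = 0 ∨ x = 1 := by
  revert x; decide

theorem card_filter_update_lt {α β : Type*} [Fintype α] [DecidableEq α] {p : β → Prop}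
    [DecidablePred p] (f : α → β) {a : α} {v : β} (ha : p (f a)) (hv : ¬ p v) :
    #{b | p (update f a v b)} < #{b | p (f b)} := by
  have : ({b | p (update f a v b)} : Finset α) = ({b | p (f b)} : Finset α).erase a := by
    ext b
    rcases eq_or_ne b a with rfl | hb <;> simp [*]
  rw [this]
  exact card_erase_lt_of_mem (by simpa using ha)

namespace AddSubgroup

variable {G α β : Type*} [AddGroup G]

theorem closure_range_update_add [DecidableEq α] (f : α → G) {a b : α} (hab : a ≠ b) :
    closure (Set.range (update f a (f a + f b))) = closure (Set.range f) := by
  apply le_antisymm <;> rw [closure_le] <;> rintro _ ⟨c, rfl⟩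
  · rcases eq_or_ne c a with rfl | hc
    · simpa using add_mem (subset_closure (Set.mem_range_self c))
        (subset_closure (Set.mem_range_self b))
    · simpa [hc] using subset_closure (Set.mem_range_self c)
  · rcases eq_or_ne c a with rfl | hc
    · simpa [hab.symm] using sub_mem (subset_closure (Set.mem_range_self c))
        (subset_closure (Set.mem_range_self (f := update f c (f c + f b)) b))
    · simpa [hc] using subset_closure (Set.mem_range_self (f := update f a (f a + f b)) c)

theorem closure_update_left_add [DecidableEq α] [DecidableEq β] (g : α → G) (h : β → G) {a : α}
    {d : α ⊕ β} (hd : d ≠ .inl a) :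
    closure (Set.range (update g a (g a + Sum.elim g h d)) ∪ Set.range h) =
      closure (Set.range g ∪ Set.range h) := by
  rw [← Set.Sum.elim_range, ← Set.Sum.elim_range, ← Sum.update_elim_inl]
  exact closure_range_update_add (Sum.elim g h) hd.symm

theorem closure_update_right_add [DecidableEq α] [DecidableEq β] (g : α → G) (h : β → G) {b : β}
    {d : α ⊕ β} (hd : d ≠ .inr b) :
    closure (Set.range g ∪ Set.range (update h b (h b + Sum.elim g h d))) =
      closure (Set.range g ∪ Set.range h) := by
  rw [← Set.Sum.elim_range, ← Set.Sum.elim_range, ← Sum.update_elim_inr]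
  exact closure_range_update_add (Sum.elim g h) hd.symm

end AddSubgroup

section StandardFamily

variable {M ι κ : Type*} [AddCommGroup M] [Module (ZMod 2) M] (Q : QuadraticForm (ZMod 2) M)

theorem QuadraticMap.polar_self_eq_zero_of_zmod_two (x : M) : polar Q x x = 0 := by
  rw [polar_self, two_nsmul, CharTwo.add_self_eq_zero]

theorem QuadraticMap.polar_update_add_eq_zero {β : Type*} [DecidableEq β] {f : β → M}
    (hf : ∀ a b, polar Q (f a) (f b) = 0) {a : β} {x : M} (hx : ∀ b ≠ a, polar Q (f b) x = 0)
    (b b' : β) : polar Q (update f a (f a + x) b) (update f a (f a + x) b') = 0 := by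
  by_cases hb : b = a <;> by_cases hb' : b' = a
  · subst hb hb'
    exact polar_self_eq_zero_of_zmod_two Q _
  · subst hb
    simp [update_of_ne hb', polar_add_left, hf, polar_comm Q x, hx b' hb']
  · subst hb'
    simp [update_of_ne hb, polar_add_right, hf, hx b hb]
  · simp [update_of_ne hb, update_of_ne hb', hf]

/-- The symplectic pairs are `g (.inl j), h j` for `j : ι`; the isotropic generators are
`g (.inr k)` for `k : κ`. -/
structure HasStandardRelations (g : ι ⊕ κ → M) (h : ι → M) : Prop where
  polar_g_g : ∀ a b, polar Q (g a) (g b) = 0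
  polar_h_h : ∀ i j, polar Q (h i) (h j) = 0
  polar_g_h_self : ∀ j, polar Q (g (.inl j)) (h j) = 1
  polar_g_h_of_ne : ∀ a j, a ≠ .inl j → polar Q (g a) (h j) = 0

def IsTypeI (g : ι ⊕ κ → M) (h : ι → M) : Prop :=
  (∀ a, Q (g a) = 0) ∧ ∀ j, Q (h j) = 0

def IsTypeII (g : ι ⊕ κ → M) (h : ι → M) : Prop :=
  ∃ k, Q (g (.inr k)) = 1 ∧ (∀ a ≠ .inr k, Q (g a) = 0) ∧ ∀ j, Q (h j) = 0

def IsTypeIII (g : ι ⊕ κ → M) (h : ι → M) : Prop :=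
  ∃ j, Q (g (.inl j)) = 1 ∧ Q (h j) = 1 ∧ (∀ a ≠ .inl j, Q (g a) = 0) ∧ ∀ i ≠ j, Q (h i) = 0

theorem isTypeI_or_isTypeII_or_isTypeIII_of_forall {g : ι ⊕ κ → M} {h : ι → M}
    (hpair : ∀ j, Q (g (.inl j)) = Q (h j))
    (hiso : ∀ k k', Q (g (.inr k)) = 1 → Q (g (.inr k')) = 1 → k = k')
    (hmix : ∀ k j, Q (g (.inr k)) = 1 → Q (g (.inl j)) ≠ 1)
    (hpairs : ∀ i j, Q (h i) = 1 → Q (h j) = 1 → i = j) :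
    IsTypeI Q g h ∨ IsTypeII Q g h ∨ IsTypeIII Q g h := by
  have eq_zero {x : ZMod 2} (hx : x ≠ 1) : x = 0 := (zmod_two_eq_zero_or_eq_one x).resolve_right hx
  by_cases hk : ∃ k, Q (g (.inr k)) = 1
  · obtain ⟨k, hk⟩ := hk
    have hh (j : ι) : Q (h j) = 0 := eq_zero (hpair j ▸ hmix k j hk)
    refine .inr (.inl ⟨k, hk, ?_, hh⟩)
    rintro (j | k') hne
    · exact (hpair j).trans (hh j)
    · exact eq_zero fun hk' => hne (congrArg _ (hiso k' k hk' hk))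
  push Not at hk
  by_cases hj : ∃ j, Q (h j) = 1
  · obtain ⟨j, hj⟩ := hj
    refine .inr (.inr ⟨j, (hpair j).trans hj, hj, ?_, fun i hi => ?_⟩)
    · rintro (i | k) hi
      · exact (hpair i).trans (eq_zero fun hi' => hi (congrArg _ (hpairs i j hi' hj)))
      · exact eq_zero (hk k)
    · exact eq_zero fun hi' => hi (hpairs i j hi' hj)
  · push Not at hj
    refine .inl ⟨?_, fun j => eq_zero (hj j)⟩
    rintro (i | k)
    · exact (hpair i).trans (eq_zero (hj i))
    · exact eq_zero (hk k)

namespace HasStandardRelations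

variable {Q} {g : ι ⊕ κ → M} {h : ι → M} (hs : HasStandardRelations Q g h)
include hs

theorem update_left [DecidableEq ι] [DecidableEq κ] {a : ι ⊕ κ} {x : M}
    (hxg : ∀ b ≠ a, polar Q (g b) x = 0) (hxh : ∀ j, polar Q x (h j) = 0) :
    HasStandardRelations Q (update g a (g a + x)) h := by
  have hgh (b : ι ⊕ κ) (j : ι) :
      polar Q (update g a (g a + x) b) (h j) = polar Q (g b) (h j) := by
    rcases eq_or_ne b a with rfl | hb
    · simp [polar_add_left, hxh]
    · simp [hb]
  exact ⟨polar_update_add_eq_zero Q hs.polar_g_g hxg, hs.polar_h_h,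
    fun j => (hgh _ j).trans (hs.polar_g_h_self j),
    fun b j hb => (hgh b j).trans (hs.polar_g_h_of_ne b j hb)⟩

theorem update_right [DecidableEq ι] {j : ι} {y : M} (hyg : ∀ a, polar Q (g a) y = 0)
    (hyh : ∀ i ≠ j, polar Q (h i) y = 0) : HasStandardRelations Q g (update h j (h j + y)) := by
  have hgh (a : ι ⊕ κ) (i : ι) :
      polar Q (g a) (update h j (h j + y) i) = polar Q (g a) (h i) := by
    rcases eq_or_ne i j with rfl | hi
    · simp [polar_add_right, hyg]
    · simp [hi]
  exact ⟨hs.polar_g_g, polar_update_add_eq_zero Q hs.polar_h_h hyh,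
    fun i => (hgh _ i).trans (hs.polar_g_h_self i),
    fun a i ha => (hgh a i).trans (hs.polar_g_h_of_ne a i ha)⟩

theorem update_two_pairs [DecidableEq ι] [DecidableEq κ] {i j : ι} (hne : i ≠ j) :
    HasStandardRelations Q (update g (.inl i) (g (.inl i) + g (.inl j)))
      (update h j (h j + h i)) := by
  have hji : (Sum.inl j : ι ⊕ κ) ≠ .inl i := Sum.inl_injective.ne hne.symm
  refine ⟨polar_update_add_eq_zero Q hs.polar_g_g fun b _ => hs.polar_g_g b _,
    polar_update_add_eq_zero Q hs.polar_h_h fun m _ => hs.polar_h_h m _,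
    fun m => ?_, fun b m hb => ?_⟩
  · by_cases hmi : m = i
    · subst hmi
      simp [update_of_ne hne, polar_add_left, hs.polar_g_h_self, hs.polar_g_h_of_ne _ _ hji]
    by_cases hmj : m = j
    · subst hmj
      simp [update_of_ne hji, polar_add_right, hs.polar_g_h_self, hs.polar_g_h_of_ne _ _ hji]
    simp [hmi, hmj, hs.polar_g_h_self]
  · by_cases hbi : b = .inl i <;> by_cases hmj : m = j
    · subst hbi hmj
      simp [polar_add_left, polar_add_right, hs.polar_g_h_self, hs.polar_g_h_of_ne _ _ hb,
        hs.polar_g_h_of_ne _ _ hji]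
      decide
    · subst hbi
      simp [hmj, polar_add_left, hs.polar_g_h_of_ne _ _ hb,
        hs.polar_g_h_of_ne (.inl j) m (by simpa using Ne.symm hmj)]
    · subst hmj
      simp [hbi, polar_add_right, hs.polar_g_h_of_ne _ _ hb, hs.polar_g_h_of_ne _ _ hbi]
    · simp [hbi, hmj, hs.polar_g_h_of_ne _ _ hb]

end HasStandardRelations

variable [Fintype ι] [Fintype κ]

def oddCount (g : ι ⊕ κ → M) (h : ι → M) : ℕ :=
  #{a | Q (g a) = 1} + #{j | Q (h j) = 1}

def CanReduce (g : ι ⊕ κ → M) (h : ι → M) : Prop :=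
  ∃ (g' : ι ⊕ κ → M) (h' : ι → M), HasStandardRelations Q g' h' ∧
    AddSubgroup.closure (Set.range g' ∪ Set.range h') =
      AddSubgroup.closure (Set.range g ∪ Set.range h) ∧
    oddCount Q g' h' < oddCount Q g h

variable {Q} {g : ι ⊕ κ → M} {h : ι → M}

theorem oddCount_update_left_lt [DecidableEq ι] [DecidableEq κ] {a : ι ⊕ κ} {v : M}
    (ha : Q (g a) = 1) (hv : Q v = 0) : oddCount Q (update g a v) h < oddCount Q g h :=
  Nat.add_lt_add_right (card_filter_update_lt (p := fun x => Q x = 1) g ha (by simp [hv])) _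

theorem oddCount_update_right_lt [DecidableEq ι] {j : ι} {v : M} (hj : Q (h j) = 1)
    (hv : Q v = 0) : oddCount Q g (update h j v) < oddCount Q g h :=
  Nat.add_lt_add_left (card_filter_update_lt (p := fun x => Q x = 1) h hj (by simp [hv])) _

namespace HasStandardRelations

variable [DecidableEq ι] [DecidableEq κ] (hs : HasStandardRelations Q g h)
include hs

theorem canReduce_of_pair_odd_even {j : ι} (hg : Q (g (.inl j)) = 1) (hh : Q (h j) = 0) :
    CanReduce Q g h := by
  refine ⟨_, h, hs.update_left (fun b hb => hs.polar_g_h_of_ne b j hb) (hs.polar_h_h j),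
    AddSubgroup.closure_update_left_add g h (d := .inr j) Sum.inr_ne_inl,
    oddCount_update_left_lt hg ?_⟩
  rw [QuadraticMap.map_add Q, hg, hh, hs.polar_g_h_self]
  decide

theorem canReduce_of_pair_even_odd {j : ι} (hg : Q (g (.inl j)) = 0) (hh : Q (h j) = 1) :
    CanReduce Q g h := by
  refine ⟨g, _, hs.update_right (fun a => hs.polar_g_g a _)
    (fun i hi => (polar_comm Q _ _).trans (hs.polar_g_h_of_ne _ i (by simpa using hi.symm))),
    AddSubgroup.closure_update_right_add g h (d := .inl (.inl j)) Sum.inl_ne_inr,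
    oddCount_update_right_lt hh ?_⟩
  rw [QuadraticMap.map_add Q, hg, hh, polar_comm, hs.polar_g_h_self]
  decide

theorem canReduce_of_odd_of_odd_isotropic {a : ι ⊕ κ} {k : κ} (hne : a ≠ .inr k)
    (ha : Q (g a) = 1) (hk : Q (g (.inr k)) = 1) : CanReduce Q g h := by
  refine ⟨_, h, hs.update_left (fun b _ => hs.polar_g_g b _)
    (fun j => hs.polar_g_h_of_ne _ j Sum.inr_ne_inl),
    AddSubgroup.closure_update_left_add g h (d := .inl (.inr k)) (by simpa using hne.symm),
    oddCount_update_left_lt ha ?_⟩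
  rw [QuadraticMap.map_add Q, ha, hk, hs.polar_g_g]
  decide

theorem canReduce_of_two_odd_pairs {i j : ι} (hne : i ≠ j) (hgi : Q (g (.inl i)) = 1)
    (hhi : Q (h i) = 1) (hgj : Q (g (.inl j)) = 1) (hhj : Q (h j) = 1) : CanReduce Q g h := by
  refine ⟨_, _, hs.update_two_pairs hne,
    (AddSubgroup.closure_update_right_add _ h (d := .inr i) (by simpa using hne)).trans
      (AddSubgroup.closure_update_left_add g h (d := .inl (.inl j)) (by simpa using hne.symm)),
    (oddCount_update_right_lt hhj ?_).trans (oddCount_update_left_lt hgi ?_)⟩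
  · rw [QuadraticMap.map_add Q, hhj, hhi, hs.polar_h_h]
    decide
  · rw [QuadraticMap.map_add Q, hgi, hgj, hs.polar_g_g]
    decide

theorem canReduce (htype : ¬ (IsTypeI Q g h ∨ IsTypeII Q g h ∨ IsTypeIII Q g h)) :
    CanReduce Q g h := by
  by_contra hstuck
  have hpair (j : ι) : Q (g (.inl j)) = Q (h j) := by
    rcases zmod_two_eq_zero_or_eq_one (Q (g (.inl j))) with hg | hg <;>
      rcases zmod_two_eq_zero_or_eq_one (Q (h j)) with hh | hh
    · rw [hg, hh]
    · exact (hstuck (hs.canReduce_of_pair_even_odd hg hh)).elim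
    · exact (hstuck (hs.canReduce_of_pair_odd_even hg hh)).elim
    · rw [hg, hh]
  refine htype (isTypeI_or_isTypeII_or_isTypeIII_of_forall Q hpair ?_ ?_ ?_)
  · intro k k' hk hk'
    by_contra hne
    exact hstuck (hs.canReduce_of_odd_of_odd_isotropic (Sum.inr_injective.ne hne) hk hk')
  · intro k j hk hj
    exact hstuck (hs.canReduce_of_odd_of_odd_isotropic Sum.inl_ne_inr hj hk)
  · intro i j hi hj
    by_contra hne
    exact hstuck
      (hs.canReduce_of_two_odd_pairs hne ((hpair i).trans hi) hi ((hpair j).trans hj) hj)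

theorem exists_typeI_or_typeII_or_typeIII :
    ∃ (g' : ι ⊕ κ → M) (h' : ι → M), HasStandardRelations Q g' h' ∧
      AddSubgroup.closure (Set.range g' ∪ Set.range h') =
        AddSubgroup.closure (Set.range g ∪ Set.range h) ∧
      (IsTypeI Q g' h' ∨ IsTypeII Q g' h' ∨ IsTypeIII Q g' h') := by
  induction hN : oddCount Q g h using Nat.strong_induction_on generalizing g h with
  | _ N ih =>
  by_cases htype : IsTypeI Q g h ∨ IsTypeII Q g h ∨ IsTypeIII Q g h
  · exact ⟨g, h, hs, rfl, htype⟩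
  obtain ⟨g', h', hs', hcl', hlt⟩ := hs.canReduce htype
  obtain ⟨g'', h'', hs'', hcl'', htype''⟩ := ih _ (hN ▸ hlt) hs' rfl
  exact ⟨g'', h'', hs'', hcl''.trans hcl', htype''⟩

end HasStandardRelations

end StandardFamily

section Pauli

variable {n : ℕ}

theorem sip_comm (a b : Pauli n) : sip a b = sip b a :=
  Finset.sum_congr rfl fun _ _ => by ring

theorem sip_add_left (a b x : Pauli n) : sip (a + b) x = sip a x + sip b x := by
  simp only [sip, ← Finset.sum_add_distrib, Prod.fst_add, Prod.snd_add, Pi.add_apply]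
  exact Finset.sum_congr rfl fun _ _ => by ring

theorem sip_smul_left (t : ZMod 2) (a x : Pauli n) : sip (t • a) x = t * sip a x := by
  simp only [sip, Finset.mul_sum, Prod.smul_fst, Prod.smul_snd, Pi.smul_apply, smul_eq_mul]
  exact Finset.sum_congr rfl fun _ _ => by ring

def sipBilin : LinearMap.BilinForm (ZMod 2) (Pauli n) :=
  LinearMap.mk₂ (ZMod 2) sip sip_add_left sip_smul_left
    (fun x a b => by rw [sip_comm, sip_add_left, sip_comm a, sip_comm b])
    (fun t x a => by rw [sip_comm, sip_smul_left, sip_comm, smul_eq_mul])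

theorem natCast_wtP_add (a b : Pauli n) :
    (wtP (a + b) : ZMod 2) = wtP a + wtP b + sip a b := by
  have support_parity : ∀ a₁ a₂ b₁ b₂ : ZMod 2,
      (if a₁ + b₁ ≠ 0 ∨ a₂ + b₂ ≠ 0 then (1 : ZMod 2) else 0) =
        (if a₁ ≠ 0 ∨ a₂ ≠ 0 then 1 else 0) + (if b₁ ≠ 0 ∨ b₂ ≠ 0 then 1 else 0) +
          (a₁ * b₂ + a₂ * b₁) := by decide
  simp only [wtP, sip, Finset.natCast_card_filter, ← Finset.sum_add_distrib]
  exact Finset.sum_congr rfl fun i _ => support_parity (a.1 i) (a.2 i) (b.1 i) (b.2 i)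

def wtParity : QuadraticForm (ZMod 2) (Pauli n) where
  toFun a := wtP a
  toFun_smul t a := by rcases zmod_two_eq_zero_or_eq_one t with rfl | rfl <;> simp [wtP]
  exists_companion' := ⟨sipBilin, natCast_wtP_add⟩

theorem wtParity_apply (a : Pauli n) : wtParity a = wtP a := rfl

theorem polar_wtParity : polar (wtParity (n := n)) = sip := by
  ext a b
  rw [polar, wtParity_apply, wtParity_apply, wtParity_apply, natCast_wtP_add]
  ring

theorem even_wtP_iff (a : Pauli n) : Even (wtP a) ↔ wtParity a = 0 :=
  ZMod.natCast_eq_zero_iff_even.symm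

end Pauli

section FinEncoding

variable {n c r : ℕ}

theorem val_finSumFinEquiv_eq_val_iff (a : Fin c ⊕ Fin r) (j : Fin c) :
    ((finSumFinEquiv a : Fin (c + r)) : ℕ) = j ↔ a = .inl j := by
  rcases a with i | k
  · simp [Fin.val_inj]
  · simp only [finSumFinEquiv_apply_right, Fin.val_natAdd, reduceCtorEq, iff_false]
    omega

theorem hasStandardRelations_wtParity_comp_iff (g : Fin (c + r) → Pauli n)
    (h : Fin c → Pauli n) :
    HasStandardRelations wtParity (g ∘ finSumFinEquiv) h ↔
      (∀ i j, sip (g i) (g j) = 0) ∧ (∀ i j, sip (h i) (h j) = 0) ∧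
      ∀ (i : Fin (c + r)) (j : Fin c), sip (g i) (h j) = if (i : ℕ) = (j : ℕ) then 1 else 0 := by
  set e : Fin c ⊕ Fin r ≃ Fin (c + r) := finSumFinEquiv
  rw [← polar_wtParity]
  constructor
  · rintro ⟨hgg, hhh, hself, hne⟩
    refine ⟨fun i j => by simpa using hgg (e.symm i) (e.symm j), hhh, fun i j => ?_⟩
    obtain ⟨a, rfl⟩ := e.surjective i
    split_ifs with hij
    · rw [(val_finSumFinEquiv_eq_val_iff a j).1 hij]
      exact hself j
    · exact hne a j (mt (val_finSumFinEquiv_eq_val_iff a j).2 hij)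
  · rintro ⟨hgg, hhh, hgh⟩
    exact ⟨fun a b => hgg _ _, hhh, fun j => by simpa [e] using hgh (e (.inl j)) j,
      fun a j ha => (hgh (e a) j).trans (if_neg (mt (val_finSumFinEquiv_eq_val_iff a j).1 ha))⟩

end FinEncoding

/-- Lemma 2 of the paper: any generating set consisting of `c` symplectic pairs and `r`
isotropic generators satisfying the standard commutation relations can be replaced by a
new generating set of the same shape (generating the same subgroup and satisfying the same
commutation relations) which is of type I, II, or III. -/
theorem generators_type_I_II_III {n c r : ℕ} (g : Fin (c + r) → Pauli n) (h : Fin c → Pauli n)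
    (hgg : ∀ i j, sip (g i) (g j) = 0)
    (hhh : ∀ i j, sip (h i) (h j) = 0)
    (hgh : ∀ (i : Fin (c + r)) (j : Fin c), sip (g i) (h j) = if (i : ℕ) = (j : ℕ) then 1 else 0) :
    ∃ (g' : Fin (c + r) → Pauli n) (h' : Fin c → Pauli n),
      (AddSubgroup.closure (Set.range g' ∪ Set.range h') : AddSubgroup (Pauli n)) =
        AddSubgroup.closure (Set.range g ∪ Set.range h) ∧
      (∀ i j, sip (g' i) (g' j) = 0) ∧
      (∀ i j, sip (h' i) (h' j) = 0) ∧
      (∀ (i : Fin (c + r)) (j : Fin c),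
        sip (g' i) (h' j) = if (i : ℕ) = (j : ℕ) then 1 else 0) ∧
      -- Type I: all generators even weight
      (((∀ i, Even (wtP (g' i))) ∧ (∀ j, Even (wtP (h' j)))) ∨
      -- Type II: exactly one isotropic generator of odd weight, all others even
      ((∃ i₀ : Fin (c + r), c ≤ (i₀ : ℕ) ∧ ¬ Even (wtP (g' i₀)) ∧
          (∀ i, i ≠ i₀ → Even (wtP (g' i)))) ∧ (∀ j, Even (wtP (h' j)))) ∨
      -- Type III: one symplectic pair with both members of odd weight, all others even
      (∃ j₀ : Fin c, ¬ Even (wtP (g' (Fin.castAdd r j₀))) ∧ ¬ Even (wtP (h' j₀)) ∧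
        (∀ i : Fin (c + r), i ≠ Fin.castAdd r j₀ → Even (wtP (g' i))) ∧
        (∀ j, j ≠ j₀ → Even (wtP (h' j))))) := by
  set e : Fin c ⊕ Fin r ≃ Fin (c + r) := finSumFinEquiv
  obtain ⟨G, h', hs, hcl, htype⟩ := ((hasStandardRelations_wtParity_comp_iff g h).2
    ⟨hgg, hhh, hgh⟩).exists_typeI_or_typeII_or_typeIII
  have hG : (G ∘ e.symm) ∘ e = G := by ext1; simp
  obtain ⟨hgg', hhh', hgh'⟩ :=
    (hasStandardRelations_wtParity_comp_iff (G ∘ e.symm) h').1 (by rwa [hG])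
  refine ⟨G ∘ e.symm, h', by simpa using hcl, hgg', hhh', hgh', ?_⟩
  simp only [even_wtP_iff, Function.comp_apply]
  rcases htype with ⟨hG, hh⟩ | ⟨k, hk, hG, hh⟩ | ⟨j, hj, hhj, hG, hh⟩
  · exact .inl ⟨fun i => hG _, hh⟩
  · refine .inr (.inl ⟨⟨e (.inr k), by simp [e], by simp [hk], fun i hi => hG _ ?_⟩, hh⟩)
    exact mt e.symm_apply_eq.1 hi
  · refine .inr (.inr ⟨j, by simp [e, hj], by simp [hhj], fun i hi => hG _ ?_, hh⟩)
    exact fun hij => hi (by simpa [e] using e.symm_apply_eq.1 hij)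
end

section
/- Let V be an additive subgroup of (ℤ/2)^{2n} with symplectic orthogonal V⊥, and let B_w and B⊥_w denote the number of weight-w elements of V and V⊥ respectively. Then B⊥_i = (1/|V|) Σ_{j=0}^{n} B_j · K_i(j;n) for every 0 ≤ i ≤ n, where K_i is the quaternary Krawtchouk polynomial. -/
open Finset

/-- Quaternary Krawtchouk polynomial at integer points. -/
noncomputable def kraw (n i x : ℕ) : ℝ :=
  ∑ j ∈ Finset.range (i + 1),
    (-1 : ℝ) ^ j * 3 ^ (i - j) * (x.choose j) * ((n - x).choose (i - j))

open Polynomial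

/-!
Count `S = ∑_{g ∈ V} ∑_{wt x = i} (-1)^⟨x, g⟩` in two ways. For fixed `x`, the map
`g ↦ (-1)^⟨x, g⟩` is a character of `V`, so its sum is `|V|` if `x ∈ V⊥` and `0` otherwise;
hence `S = |V| B⊥_i`. For fixed `g`, the generating function `∑_x (-1)^⟨x, g⟩ z^wt(x)` factors
over the qubits, each contributing `1 - z` where `g` acts nontrivially and `1 + 3z` elsewhere,
so the inner sum is the coefficient of `z^i` in `(1 - z)^wt(g) (1 + 3z)^(n - wt(g))`, which is
`K_i(wt(g); n)`; hence `S = ∑_j B_j K_i(j; n)`.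
-/

theorem AddChar.map_sum_eq_prod {ι A M : Type*} [AddCommMonoid A] [CommMonoid M]
    (ψ : AddChar A M) (s : Finset ι) (f : ι → A) : ψ (∑ i ∈ s, f i) = ∏ i ∈ s, ψ (f i) := by
  induction s using Finset.cons_induction <;> simp [AddChar.map_add_eq_mul, *]

theorem AddSubgroup.sum_addChar_eq_ite {A R : Type*} [AddGroup A] [Fintype A] [CommSemiring R]
    [IsDomain R] (V : AddSubgroup A) [DecidablePred (· ∈ V)] (ψ : AddChar A R)
    [Decidable (∀ g ∈ V, ψ g = 1)] :
    ∑ g with g ∈ V, ψ g = if ∀ g ∈ V, ψ g = 1 then (Nat.card V : R) else 0 := by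
  classical
  rw [sum_subtype (p := (· ∈ V)) _ (fun _ ↦ by simp), Nat.card_eq_fintype_card]
  exact (ψ.compAddMonoidHom V.subtype).sum_eq_ite.trans
    (if_congr (by simp [AddChar.eq_zero_iff]) rfl rfl)

theorem Polynomial.coeff_one_add_C_mul_X_pow {R : Type*} [CommSemiring R] (a : R) (m k : ℕ) :
    ((1 + C a * X) ^ m).coeff k = a ^ k * m.choose k := by
  have hexp : (1 + C a * X) ^ m = ∑ j ∈ range (m + 1), C (a ^ j * m.choose j) * X ^ j := by
    rw [add_comm, add_pow]
    refine sum_congr rfl fun j _ ↦ ?_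
    simp only [one_pow, mul_one, mul_pow, ← C_pow, map_mul, map_natCast]
    ring
  rw [hexp, finsetSum_coeff]
  simp only [coeff_C_mul_X_pow, sum_ite_eq, mem_range, Nat.lt_succ_iff]
  split_ifs with hk
  · rfl
  · simp [Nat.choose_eq_zero_of_lt (not_le.1 hk)]

theorem kraw_eq_coeff (n i w : ℕ) :
    kraw n i w = ((1 - X) ^ w * (1 + 3 * X) ^ (n - w) : ℝ[X]).coeff i := by
  have h₁ : (1 - X : ℝ[X]) = 1 + C (-1) * X := by simp [sub_eq_add_neg]
  have h₃ : (1 + 3 * X : ℝ[X]) = 1 + C 3 * X := by rw [map_ofNat]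
  rw [h₁, h₃, coeff_mul, Nat.sum_antidiagonal_eq_sum_range_succ_mk, kraw]
  simp only [coeff_one_add_C_mul_X_pow]
  exact sum_congr rfl fun j _ ↦ by ring

noncomputable def signChar : AddChar (ZMod 2) ℝ :=
  AddChar.zmodChar 2 (by norm_num : (-1 : ℝ) ^ 2 = 1)

@[simp] theorem signChar_zero : signChar 0 = 1 := AddChar.map_zero_eq_one _

@[simp] theorem signChar_one : signChar 1 = -1 := by
  simp [signChar, AddChar.zmodChar_apply, ZMod.val_one]

theorem signChar_eq_one_iff {a : ZMod 2} : signChar a = 1 ↔ a = 0 := by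
  rcases (by decide : ∀ b : ZMod 2, b = 0 ∨ b = 1) a with rfl | rfl <;> norm_num

theorem sum_signChar_mul_X_pow_ite (c₁ c₂ : ZMod 2) :
    ∑ a : ZMod 2 × ZMod 2,
        C (signChar (a.1 * c₂ + a.2 * c₁)) * X ^ (if a.1 ≠ 0 ∨ a.2 ≠ 0 then 1 else 0) =
      if c₁ ≠ 0 ∨ c₂ ≠ 0 then 1 - X else (1 + 3 * X : ℝ[X]) := by
  have sum_zmod_two (f : ZMod 2 → ℝ[X]) : ∑ a, f a = f 0 + f 1 := Fin.sum_univ_two f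
  have zmod_two (b : ZMod 2) : b = 0 ∨ b = 1 := by revert b; decide
  simp only [Fintype.sum_prod_type, sum_zmod_two]
  rcases zmod_two c₁ with rfl | rfl <;> rcases zmod_two c₂ with rfl | rfl <;>
    simp [(by decide : (1 : ZMod 2) + 1 = 0)] <;> ring

section Pauli

variable {n : ℕ}

theorem wtP_le (x : Pauli n) : wtP x ≤ n :=
  (card_filter_le _ _).trans (card_fin n).le

theorem sip_add_right (x g h : Pauli n) : sip x (g + h) = sip x g + sip x h := by
  simp only [sip, ← sum_add_distrib, Prod.fst_add, Prod.snd_add, Pi.add_apply]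
  exact sum_congr rfl fun _ _ ↦ by ring

theorem sum_signChar_sip_eq_ite (V : AddSubgroup (Pauli n)) [DecidablePred (· ∈ V)]
    (x : Pauli n) [Decidable (∀ g ∈ V, sip x g = 0)] :
    ∑ g with g ∈ V, signChar (sip x g) =
      if ∀ g ∈ V, sip x g = 0 then (Nat.card V : ℝ) else 0 :=
  (V.sum_addChar_eq_ite (signChar.compAddMonoidHom (.mk' (sip x) (sip_add_right x)))).trans
    (if_congr (by simp [signChar_eq_one_iff]) rfl rfl)

theorem sum_prod_pauli_eq_prod_sum {M : Type*} [CommSemiring M] (F : Fin n → ZMod 2 × ZMod 2 → M) :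
    ∑ x : Pauli n, ∏ t, F t (x.1 t, x.2 t) = ∏ t, ∑ a, F t a := by
  rw [Fintype.prod_sum, ← (Equiv.arrowProdEquivProdArrow _ _ _).symm.sum_comp]
  rfl

theorem sum_signChar_sip_mul_X_pow_wtP (g : Pauli n) :
    ∑ x : Pauli n, C (signChar (sip x g)) * X ^ wtP x =
      (1 - X) ^ wtP g * (1 + 3 * X) ^ (n - wtP g) := by
  let F (t : Fin n) (a : ZMod 2 × ZMod 2) : ℝ[X] :=
    C (signChar (a.1 * g.2 t + a.2 * g.1 t)) * X ^ (if a.1 ≠ 0 ∨ a.2 ≠ 0 then 1 else 0)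
  have factor (x : Pauli n) :
      C (signChar (sip x g)) * X ^ wtP x = ∏ t, F t (x.1 t, x.2 t) := by
    rw [prod_mul_distrib, prod_pow_eq_pow_sum, ← card_filter, ← map_prod,
      ← AddChar.map_sum_eq_prod]
    rfl
  rw [Fintype.sum_congr _ _ factor, sum_prod_pauli_eq_prod_sum F]
  simp only [F, sum_signChar_mul_X_pow_ite]
  rw [prod_ite, prod_const, prod_const]
  congr 2
  have h := card_filter_add_card_filter_not (s := univ) (fun t ↦ g.1 t ≠ 0 ∨ g.2 t ≠ 0)
  rw [card_univ, Fintype.card_fin] at h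
  rw [wtP]
  omega

theorem sum_signChar_sip_of_wtP_eq (g : Pauli n) (i : ℕ) :
    ∑ x with wtP x = i, signChar (sip x g) = kraw n i (wtP g) := by
  rw [kraw_eq_coeff, ← sum_signChar_sip_mul_X_pow_wtP, finsetSum_coeff, sum_filter]
  exact sum_congr rfl fun x _ ↦ by rw [coeff_C_mul_X_pow]; exact if_congr eq_comm rfl rfl

end Pauli

theorem pauli_macwilliams_general {n : ℕ} (V : AddSubgroup (Pauli n)) (i : ℕ) :
    ({x | (∀ g ∈ V, sip x g = 0) ∧ wtP x = i}.ncard : ℝ) =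
      (1 / (Nat.card V : ℝ)) *
        ∑ j ∈ Finset.range (n + 1),
          ({x | x ∈ V ∧ wtP x = j}.ncard : ℝ) * kraw n i j := by
  classical
  have hV : (Nat.card V : ℝ) ≠ 0 := Nat.cast_ne_zero.2 Nat.card_pos.ne'
  simp only [Set.ncard_eq_toFinset_card', Set.toFinset_ofPred]
  rw [one_div, eq_inv_mul_iff_mul_eq₀ hV]
  calc (Nat.card V : ℝ) * #{x | (∀ g ∈ V, sip x g = 0) ∧ wtP x = i}
      = ∑ x with wtP x = i, ∑ g with g ∈ V, signChar (sip x g) := by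
        simp only [sum_signChar_sip_eq_ite, sum_ite, sum_const_zero, add_zero, sum_const,
          filter_filter, nsmul_eq_mul, and_comm, mul_comm]
    _ = ∑ g with g ∈ V, ∑ x with wtP x = i, signChar (sip x g) := sum_comm
    _ = ∑ g with g ∈ V, kraw n i (wtP g) := by simp only [sum_signChar_sip_of_wtP_eq]
    _ = ∑ j ∈ range (n + 1), #{x | x ∈ V ∧ wtP x = j} * kraw n i j := by
        rw [← sum_fiberwise_of_maps_to (g := wtP) (t := range (n + 1))
          fun g _ ↦ mem_range.2 (Nat.lt_succ_of_le (wtP_le g))]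
        refine sum_congr rfl fun j _ ↦ ?_
        rw [filter_filter, sum_congr rfl fun g hg ↦ by rw [(mem_filter.1 hg).2.2], sum_const,
          nsmul_eq_mul]

/-- MacWilliams identity for an additive subgroup of Pauli operators and its symplectic
orthogonal. -/
theorem pauli_macwilliams {n : ℕ} (V : AddSubgroup (Pauli n)) (i : ℕ) (hi : i ≤ n) :
    ({x | (∀ g ∈ V, sip x g = 0) ∧ wtP x = i}.ncard : ℝ) =
      (1 / (Nat.card V : ℝ)) *
        ∑ j ∈ Finset.range (n + 1),
          ({x | x ∈ V ∧ wtP x = j}.ncard : ℝ) * kraw n i j :=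
  pauli_macwilliams_general V i
end
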